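/- arXiv:2002.01507 — 2 statements merged into one kernel-verified Lean document; each statement's English description precedes it below -/
import Mathlib

section
/- Let Ω be a probability amplitude on ℝⁿ, M an n×n real symmetric positive definite matrix, and T₀ : ℝⁿ → ℝ a continuously differentiable function, square-integrable with respect to Ω² dq together with its first partial derivatives, with Cov(T₀,T₀) > 0 and with T₀(q)Ω(q)² → 0 as ‖q‖ → ∞. Then the mean value of the quantum potential satisfies ⟨Q⟩ ≥ (ħ²/8) · (⟨∇T₀⟩ · M ⟨∇T₀⟩) / Cov(T₀,T₀), where ⟨∇T₀⟩ ∈ ℝⁿ denotes the vector with components ⟨∂_k T₀⟩. -/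
open MeasureTheory Matrix Filter

/-- Partial derivative `∂ⱼ f` of a function on `ℝⁿ`. -/
noncomputable def pd {n : ℕ} (j : Fin n) (f : (Fin n → ℝ) → ℝ) (q : Fin n → ℝ) : ℝ :=
  fderiv ℝ f q (Pi.single j 1)

/-- Mean value `⟨T⟩ = ∫ Ω² T` with respect to the probability density `Ω²`. -/
noncomputable def expec {n : ℕ} (Ω T : (Fin n → ℝ) → ℝ) : ℝ :=
  ∫ q, (Ω q) ^ 2 * T q

/-- Covariance `Cov(T,T') = ⟨TT'⟩ - ⟨T⟩⟨T'⟩` with respect to `Ω²`. -/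
noncomputable def cov {n : ℕ} (Ω T T' : (Fin n → ℝ) → ℝ) : ℝ :=
  expec Ω (fun q => T q * T' q) - expec Ω T * expec Ω T'

/-- Mean value of the quantum potential `⟨Q⟩ = -(ħ²/2) ∫ Ω Σⱼₖ Mⱼₖ ∂ⱼ∂ₖΩ`. -/
noncomputable def meanQ {n : ℕ} (hbar : ℝ) (M : Matrix (Fin n) (Fin n) ℝ)
    (Ω : (Fin n → ℝ) → ℝ) : ℝ :=
  -(hbar ^ 2 / 2) * ∫ q, Ω q * ∑ j, ∑ k, M j k * pd j (pd k Ω) q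

/-!
Integrating by parts, `⟨Q⟩ = (ħ²/2) ∫ ∇Ωᵀ M ∇Ω`, and, since `∫ ∂ₖ(T₀ Ω²) = ∫ ∂ₖ(Ω²) = 0`,
`∫ Ω (T₀ - ⟨T₀⟩) ∇Ω = -⟨∇T₀⟩ / 2`. The Cauchy–Schwarz inequality for the positive semidefinite
form `M`, weighted by `w = Ω (T₀ - ⟨T₀⟩)` with `∫ w² = Cov(T₀,T₀)`, then gives
`⟨∇T₀⟩ᵀ M ⟨∇T₀⟩ / 4 ≤ Cov(T₀,T₀) · ∫ ∇Ωᵀ M ∇Ω`.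
-/

section WeightedCauchySchwarz

variable {X : Type*} [MeasurableSpace X] {μ : Measure X} {ι : Type*} [Fintype ι]

lemma integrable_mul_of_integrable_sq {f g : X → ℝ} (hf : AEStronglyMeasurable f μ)
    (hg : AEStronglyMeasurable g μ) (hf2 : Integrable (fun x => f x ^ 2) μ)
    (hg2 : Integrable (fun x => g x ^ 2) μ) : Integrable (fun x => f x * g x) μ :=
  ((memLp_two_iff_integrable_sq hf).2 hf2).integrable_mul ((memLp_two_iff_integrable_sq hg).2 hg2)

lemma integral_sum_sum_const_mul {κ : Type*} [Fintype κ] {F : ι → κ → X → ℝ}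
    (hF : ∀ j k, Integrable (F j k) μ) (c : ι → κ → ℝ) :
    ∫ x, ∑ j, ∑ k, c j k * F j k x ∂μ = ∑ j, ∑ k, c j k * ∫ x, F j k x ∂μ := by
  rw [integral_finsetSum _ fun j _ => integrable_finsetSum _ fun k _ => (hF j k).const_mul _]
  refine Finset.sum_congr rfl fun j _ => ?_
  rw [integral_finsetSum _ fun k _ => (hF j k).const_mul _]
  simp only [integral_const_mul]

lemma dotProduct_mulVec_self_eq_sum (M : Matrix ι ι ℝ) (y : ι → ℝ) :
    y ⬝ᵥ M *ᵥ y = ∑ j, ∑ k, M j k * (y j * y k) := by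
  simp only [dotProduct, mulVec, Finset.mul_sum]
  exact Finset.sum_congr rfl fun j _ => Finset.sum_congr rfl fun k _ => by ring

lemma integrable_dotProduct_mulVec_self (M : Matrix ι ι ℝ) {u : X → ι → ℝ}
    (huu : ∀ j k, Integrable (fun x => u x j * u x k) μ) :
    Integrable (fun x => u x ⬝ᵥ M *ᵥ u x) μ := by
  simp only [dotProduct_mulVec_self_eq_sum]
  exact integrable_finsetSum _ fun j _ => integrable_finsetSum _ fun k _ => (huu j k).const_mul _

lemma integral_dotProduct_mulVec_self (M : Matrix ι ι ℝ) {u : X → ι → ℝ}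
    (huu : ∀ j k, Integrable (fun x => u x j * u x k) μ) :
    ∫ x, u x ⬝ᵥ M *ᵥ u x ∂μ = ∑ j, ∑ k, M j k * ∫ x, u x j * u x k ∂μ := by
  simp only [dotProduct_mulVec_self_eq_sum]
  exact integral_sum_sum_const_mul huu M

variable {w : X → ℝ} {u : X → ι → ℝ}

lemma integrable_mul_dotProduct (hwu : ∀ k, Integrable (fun x => w x * u x k) μ)
    (c : ι → ℝ) : Integrable (fun x => w x * (u x ⬝ᵥ c)) μ := by
  simp only [dotProduct, Finset.mul_sum, ← mul_assoc]
  exact integrable_finsetSum _ fun k _ => (hwu k).mul_const (c k)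

lemma integral_mul_dotProduct (hwu : ∀ k, Integrable (fun x => w x * u x k) μ) (c : ι → ℝ) :
    ∫ x, w x * (u x ⬝ᵥ c) ∂μ = (fun k => ∫ x, w x * u x k ∂μ) ⬝ᵥ c := by
  simp only [dotProduct, Finset.mul_sum, ← mul_assoc]
  rw [integral_finsetSum _ fun k _ => (hwu k).mul_const (c k)]
  simp only [integral_mul_const]

-- Expand `0 ≤ ∫ gᵀ M g` for `g = A u - w a`, where `A = ∫ w²` and `a = ∫ w u`.
theorem dotProduct_mulVec_integral_le {M : Matrix ι ι ℝ} (hM : M.PosSemidef)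
    (hw : Integrable (fun x => w x ^ 2) μ) (hwu : ∀ k, Integrable (fun x => w x * u x k) μ)
    (hu : Integrable (fun x => u x ⬝ᵥ M *ᵥ u x) μ) (hA : 0 < ∫ x, w x ^ 2 ∂μ) :
    (fun k => ∫ x, w x * u x k ∂μ) ⬝ᵥ M *ᵥ (fun k => ∫ x, w x * u x k ∂μ) ≤
      (∫ x, w x ^ 2 ∂μ) * ∫ x, u x ⬝ᵥ M *ᵥ u x ∂μ := by
  set A := ∫ x, w x ^ 2 ∂μ
  set a : ι → ℝ := fun k => ∫ x, w x * u x k ∂μ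
  have hexpand : ∀ x, (A • u x - w x • a) ⬝ᵥ M *ᵥ (A • u x - w x • a) =
      A ^ 2 * (u x ⬝ᵥ M *ᵥ u x) - A * (w x * (u x ⬝ᵥ M *ᵥ a))
        - A * (w x * (u x ⬝ᵥ a ᵥ* M)) + (a ⬝ᵥ M *ᵥ a) * w x ^ 2 := by
    intro x
    simp only [sub_dotProduct, dotProduct_sub, mulVec_sub, smul_dotProduct, dotProduct_smul,
      mulVec_smul, smul_eq_mul]
    rw [dotProduct_mulVec a M (u x), dotProduct_comm (a ᵥ* M)]
    ring
  have hnonneg : 0 ≤ ∫ x, (A • u x - w x • a) ⬝ᵥ M *ᵥ (A • u x - w x • a) ∂μ :=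
    integral_nonneg fun x => by simpa using hM.dotProduct_mulVec_nonneg (A • u x - w x • a)
  simp only [hexpand] at hnonneg
  have hI1 := hu.const_mul (A ^ 2)
  have hI2 := (integrable_mul_dotProduct hwu (M *ᵥ a)).const_mul A
  have hI3 := (integrable_mul_dotProduct hwu (a ᵥ* M)).const_mul A
  rw [integral_add ((hI1.sub' hI2).sub' hI3) (hw.const_mul _), integral_sub (hI1.sub' hI2) hI3,
    integral_sub hI1 hI2, integral_const_mul, integral_const_mul, integral_const_mul,
    integral_const_mul, integral_mul_dotProduct hwu, integral_mul_dotProduct hwu,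
    dotProduct_comm a (a ᵥ* M), ← dotProduct_mulVec] at hnonneg
  refine le_of_mul_le_mul_left ?_ hA
  linarith

end WeightedCauchySchwarz

section PartialDerivatives

variable {n : ℕ} {f g : (Fin n → ℝ) → ℝ}

lemma contDiff_pd {m : ℕ} (j : Fin n) (hf : ContDiff ℝ (m + 1) f) : ContDiff ℝ m (pd j f) :=
  (hf.fderiv_right le_rfl).clm_apply contDiff_const

lemma pd_mul (j : Fin n) (hf : Differentiable ℝ f) (hg : Differentiable ℝ g) :
    pd j (fun x => f x * g x) = fun q => f q * pd j g q + g q * pd j f q := by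
  ext q
  simp [pd, fderiv_fun_mul (hf q) (hg q)]

lemma pd_sq (j : Fin n) (hf : Differentiable ℝ f) :
    pd j (fun x => f x ^ 2) = fun q => 2 * (f q * pd j f q) := by
  simp only [sq, pd_mul j hf hf]
  ext q
  ring

theorem integral_mul_pd_eq_neg (j : Fin n) (hf : Differentiable ℝ f) (hg : Differentiable ℝ g)
    (hfg : Integrable (fun q => f q * pd j g q)) (hgf : Integrable (fun q => g q * pd j f q))
    (hbd : ∫ q, pd j (fun x => f x * g x) q = 0) :
    ∫ q, f q * pd j g q = -∫ q, g q * pd j f q := by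
  rw [pd_mul j hf hg, integral_add hfg hgf] at hbd
  linarith

end PartialDerivatives

noncomputable def grad {n : ℕ} (f : (Fin n → ℝ) → ℝ) (q : Fin n → ℝ) : Fin n → ℝ :=
  fun k => pd k f q

section QuantumPotential

variable {n : ℕ} {Ω T : (Fin n → ℝ) → ℝ}

theorem meanQ_eq_integral_grad (hbar : ℝ) (M : Matrix (Fin n) (Fin n) ℝ) (hΩ : ContDiff ℝ 2 Ω)
    (hint1 : ∀ j k, Integrable (fun q => Ω q * pd j (pd k Ω) q))
    (hint2 : ∀ j k, Integrable (fun q => pd j Ω q * pd k Ω q))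
    (hbd1 : ∀ j k, ∫ q, pd j (fun x => Ω x * pd k Ω x) q = 0) :
    meanQ hbar M Ω = hbar ^ 2 / 2 * ∫ q, grad Ω q ⬝ᵥ M *ᵥ grad Ω q := by
  have hparts : ∀ j k, ∫ q, Ω q * pd j (pd k Ω) q = -∫ q, pd j Ω q * pd k Ω q := fun j k => by
    rw [integral_mul_pd_eq_neg j (hΩ.differentiable two_ne_zero)
      ((contDiff_pd k hΩ).differentiable one_ne_zero) (hint1 j k) (hint2 k j) (hbd1 j k)]
    simp only [mul_comm]
  have hpointwise : ∀ q, Ω q * ∑ j, ∑ k, M j k * pd j (pd k Ω) q =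
      ∑ j, ∑ k, M j k * (Ω q * pd j (pd k Ω) q) := fun q => by
    simp only [Finset.mul_sum, mul_left_comm (Ω q)]
  rw [meanQ, integral_dotProduct_mulVec_self (u := grad Ω) M hint2]
  simp only [hpointwise]
  rw [integral_sum_sum_const_mul hint1 M]
  simp only [grad, hparts, mul_neg, Finset.sum_neg_distrib]
  ring

lemma integrable_sq_mul_sub_sq (c : ℝ) (hΩ2 : Integrable (fun q => Ω q ^ 2))
    (hT2 : Integrable (fun q => Ω q ^ 2 * T q ^ 2)) (hT1 : Integrable (fun q => Ω q ^ 2 * T q)) :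
    Integrable (fun q => Ω q ^ 2 * (T q - c) ^ 2) := by
  refine ((hT2.sub' (hT1.const_mul (2 * c))).add (hΩ2.const_mul (c ^ 2))).congr
    (ae_of_all _ fun q => ?_)
  simp only [Pi.add_apply]
  ring

theorem cov_self_eq_integral (hΩ2 : Integrable (fun q => Ω q ^ 2)) (hΩ : ∫ q, Ω q ^ 2 = 1)
    (hT2 : Integrable (fun q => Ω q ^ 2 * T q ^ 2)) (hT1 : Integrable (fun q => Ω q ^ 2 * T q)) :
    cov Ω T T = ∫ q, Ω q ^ 2 * (T q - expec Ω T) ^ 2 := by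
  set m := expec Ω T
  have hexpand : ∀ q, Ω q ^ 2 * (T q - m) ^ 2 =
      Ω q ^ 2 * T q ^ 2 - 2 * m * (Ω q ^ 2 * T q) + m ^ 2 * Ω q ^ 2 := fun q => by ring
  simp only [hexpand]
  rw [integral_add (hT2.sub' (hT1.const_mul _)) (hΩ2.const_mul _),
    integral_sub hT2 (hT1.const_mul _), integral_const_mul, integral_const_mul, hΩ]
  simp only [cov, expec, ← sq, m]
  ring

-- The centring constant `c` drops out because `∫ ∂ₖ(Ω²) = 0`.
theorem integral_mul_sub_mul_pd (c : ℝ) (k : Fin n) (hΩ : Differentiable ℝ Ω)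
    (hT : Differentiable ℝ T) (hΩ1 : Integrable (fun q => Ω q * pd k Ω q))
    (hTΩ1 : Integrable (fun q => T q * Ω q * pd k Ω q))
    (hdT : Integrable (fun q => Ω q ^ 2 * pd k T q))
    (hbd2 : ∫ q, pd k (fun x => Ω x ^ 2) q = 0)
    (hbd3 : ∫ q, pd k (fun x => T x * Ω x ^ 2) q = 0) :
    ∫ q, Ω q * (T q - c) * pd k Ω q = -expec Ω (pd k T) / 2 := by
  have hTdΩ2 : Integrable (fun q => T q * pd k (fun x => Ω x ^ 2) q) := by
    simpa only [pd_sq k hΩ, mul_assoc, mul_left_comm] using hTΩ1.const_mul 2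
  have hTpart : ∫ q, T q * (Ω q * pd k Ω q) = -expec Ω (pd k T) / 2 := by
    have := integral_mul_pd_eq_neg (g := fun x => Ω x ^ 2) k hT (hΩ.pow 2) hTdΩ2 hdT hbd3
    rw [pd_sq k hΩ] at this
    simp only [mul_left_comm (T _) 2, integral_const_mul] at this
    rw [expec]
    linarith
  have hc : ∫ q, Ω q * pd k Ω q = 0 := by
    rw [pd_sq k hΩ, integral_const_mul] at hbd2
    simpa using hbd2
  have hsplit : ∀ q, Ω q * (T q - c) * pd k Ω q = T q * (Ω q * pd k Ω q) - c * (Ω q * pd k Ω q) :=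
    fun q => by ring
  simp only [hsplit]
  rw [integral_sub (by simpa only [mul_assoc] using hTΩ1) (hΩ1.const_mul c), integral_const_mul,
    hTpart, hc, mul_zero, sub_zero]

theorem dotProduct_mulVec_expec_pd_le {M : Matrix (Fin n) (Fin n) ℝ} (hM : M.PosSemidef)
    (hΩc : ContDiff ℝ 1 Ω) (hΩnorm : ∫ q, Ω q ^ 2 = 1) (hT : Differentiable ℝ T)
    (hT2 : Integrable (fun q => Ω q ^ 2 * T q ^ 2)) (hT1 : Integrable (fun q => Ω q ^ 2 * T q))
    (hdT : ∀ k, Integrable (fun q => Ω q ^ 2 * pd k T q)) (hcov : 0 < cov Ω T T)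
    (hint2 : ∀ j k, Integrable (fun q => pd j Ω q * pd k Ω q))
    (hbd2 : ∀ k, ∫ q, pd k (fun x => Ω x ^ 2) q = 0)
    (hbd3 : ∀ k, ∫ q, pd k (fun x => T x * Ω x ^ 2) q = 0) :
    ((fun k => expec Ω (pd k T)) ⬝ᵥ M *ᵥ fun k => expec Ω (pd k T)) / 4 ≤
      cov Ω T T * ∫ q, grad Ω q ⬝ᵥ M *ᵥ grad Ω q := by
  set m := expec Ω T
  have hΩ2 : Integrable (fun q => Ω q ^ 2) := .of_integral_ne_zero (by simp [hΩnorm])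
  have hΩ : Continuous Ω := hΩc.continuous
  have hgrad : ∀ k, Continuous (pd k Ω) := fun k => (contDiff_pd (m := 0) k hΩc).continuous
  have hgrad2 : ∀ k, Integrable (fun q => pd k Ω q ^ 2) := fun k => by
    simpa only [sq] using hint2 k k
  have hΩ1 : ∀ k, Integrable (fun q => Ω q * pd k Ω q) := fun k =>
    integrable_mul_of_integrable_sq hΩ.aestronglyMeasurable (hgrad k).aestronglyMeasurable
      hΩ2 (hgrad2 k)
  have hTΩ1 : ∀ k, Integrable (fun q => T q * Ω q * pd k Ω q) := fun k =>
    integrable_mul_of_integrable_sq (hT.continuous.mul hΩ).aestronglyMeasurable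
      (hgrad k).aestronglyMeasurable (by simpa only [mul_pow, mul_comm] using hT2) (hgrad2 k)
  have hw : Integrable (fun q => (Ω q * (T q - m)) ^ 2) := by
    simpa only [mul_pow] using integrable_sq_mul_sub_sq m hΩ2 hT2 hT1
  have hwu : ∀ k, Integrable (fun q => Ω q * (T q - m) * grad Ω q k) := fun k =>
    ((hTΩ1 k).sub' ((hΩ1 k).const_mul m)).congr (ae_of_all _ fun q => by simp only [grad]; ring)
  have ha : (fun k => ∫ q, Ω q * (T q - m) * grad Ω q k) =
      (-1 / 2 : ℝ) • fun k => expec Ω (pd k T) := by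
    ext k
    simp only [grad, Pi.smul_apply, smul_eq_mul]
    linarith [integral_mul_sub_mul_pd m k (hΩc.differentiable one_ne_zero) hT (hΩ1 k) (hTΩ1 k)
      (hdT k) (hbd2 k) (hbd3 k)]
  have hcov_eq : cov Ω T T = ∫ q, (Ω q * (T q - m)) ^ 2 := by
    simp only [mul_pow]
    exact cov_self_eq_integral hΩ2 hΩnorm hT2 hT1
  have hCS := dotProduct_mulVec_integral_le hM hw hwu
    (integrable_dotProduct_mulVec_self M hint2) (hcov_eq ▸ hcov)
  rw [ha, ← hcov_eq] at hCS
  simp only [smul_dotProduct, mulVec_smul, dotProduct_smul, smul_eq_mul] at hCS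
  linarith

end QuantumPotential

theorem meanQ_ge_bound_general {n : ℕ} (hbar : ℝ)
    (Ω : (Fin n → ℝ) → ℝ) (hΩc : ContDiff ℝ 2 Ω)
    (hΩnorm : ∫ q, (Ω q) ^ 2 = 1)
    (M : Matrix (Fin n) (Fin n) ℝ) (hM : M.PosDef)
    (T₀ : (Fin n → ℝ) → ℝ) (hT₀ : ContDiff ℝ 1 T₀)
    -- `T₀` and its first partial derivatives are square integrable w.r.t. `Ω² dq`
    (hT₀L2 : Integrable (fun q => (Ω q) ^ 2 * (T₀ q) ^ 2))
    (hT₀L1 : Integrable (fun q => (Ω q) ^ 2 * T₀ q))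
    (hdT₀L1 : ∀ k, Integrable (fun q => (Ω q) ^ 2 * pd k T₀ q))
    (hcov : 0 < cov Ω T₀ T₀)
    -- all integrals appearing converge absolutely
    (hint1 : ∀ j k, Integrable (fun q => Ω q * pd j (pd k Ω) q))
    (hint2 : ∀ j k, Integrable (fun q => pd j Ω q * pd k Ω q))
    -- all boundary terms in integration by parts vanish
    (hbd1 : ∀ j k, ∫ q, pd j (fun x => Ω x * pd k Ω x) q = 0)
    (hbd2 : ∀ k, ∫ q, pd k (fun x => (Ω x) ^ 2) q = 0)
    (hbd3 : ∀ k, ∫ q, pd k (fun x => T₀ x * (Ω x) ^ 2) q = 0) :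
    meanQ hbar M Ω ≥ hbar ^ 2 / 8 *
      ((fun k => expec Ω (pd k T₀)) ⬝ᵥ M.mulVec (fun k => expec Ω (pd k T₀))) /
        cov Ω T₀ T₀ := by
  set s := (fun k => expec Ω (pd k T₀)) ⬝ᵥ M *ᵥ fun k => expec Ω (pd k T₀)
  set K := ∫ q, grad Ω q ⬝ᵥ M *ᵥ grad Ω q
  have hsK : s / cov Ω T₀ T₀ ≤ 4 * K := by
    rw [div_le_iff₀ hcov]
    linarith [dotProduct_mulVec_expec_pd_le hM.posSemidef (hΩc.of_le one_le_two) hΩnorm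
      (hT₀.differentiable one_ne_zero) hT₀L2 hT₀L1 hdT₀L1 hcov hint2 hbd2 hbd3]
  rw [meanQ_eq_integral_grad hbar M hΩc hint1 hint2 hbd1, ge_iff_le]
  calc hbar ^ 2 / 8 * s / cov Ω T₀ T₀ = hbar ^ 2 / 8 * (s / cov Ω T₀ T₀) := by ring
    _ ≤ hbar ^ 2 / 8 * (4 * K) := by gcongr
    _ = hbar ^ 2 / 2 * K := by ring

/-- lower bound on the mean value of the quantum potential given by an
arbitrary function `T₀`. -/
theorem meanQ_ge_bound {n : ℕ} (hn : 1 ≤ n) (hbar : ℝ) (hhbar : 0 < hbar)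
    (Ω : (Fin n → ℝ) → ℝ) (hΩc : ContDiff ℝ 2 Ω) (hΩpos : ∀ q, 0 < Ω q)
    (hΩnorm : ∫ q, (Ω q) ^ 2 = 1)
    (M : Matrix (Fin n) (Fin n) ℝ) (hM : M.PosDef)
    (T₀ : (Fin n → ℝ) → ℝ) (hT₀ : ContDiff ℝ 1 T₀)
    -- `T₀` and its first partial derivatives are square integrable w.r.t. `Ω² dq`
    (hT₀L2 : Integrable (fun q => (Ω q) ^ 2 * (T₀ q) ^ 2))
    (hT₀L1 : Integrable (fun q => (Ω q) ^ 2 * T₀ q))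
    (hdT₀L2 : ∀ k, Integrable (fun q => (Ω q) ^ 2 * (pd k T₀ q) ^ 2))
    (hdT₀L1 : ∀ k, Integrable (fun q => (Ω q) ^ 2 * pd k T₀ q))
    (hcov : 0 < cov Ω T₀ T₀)
    -- `T₀ Ω² → 0` at infinity
    (hT₀dec : Tendsto (fun q => T₀ q * (Ω q) ^ 2) (cocompact (Fin n → ℝ)) (nhds 0))
    -- all integrals appearing converge absolutely
    (hint1 : ∀ j k, Integrable (fun q => Ω q * pd j (pd k Ω) q))
    (hint2 : ∀ j k, Integrable (fun q => pd j Ω q * pd k Ω q))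
    (hint3 : ∀ k, Integrable (fun q => (Ω q) ^ 2 * pd k (fun x => Real.log ((Ω x) ^ 2)) q))
    (hint4 : ∀ j k, Integrable (fun q => (Ω q) ^ 2 *
      (pd j (fun x => Real.log ((Ω x) ^ 2)) q * pd k (fun x => Real.log ((Ω x) ^ 2)) q)))
    -- all boundary terms in integration by parts vanish
    (hbd1 : ∀ j k, ∫ q, pd j (fun x => Ω x * pd k Ω x) q = 0)
    (hbd2 : ∀ k, ∫ q, pd k (fun x => (Ω x) ^ 2) q = 0)
    (hbd3 : ∀ k, ∫ q, pd k (fun x => T₀ x * (Ω x) ^ 2) q = 0) :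
    meanQ hbar M Ω ≥ hbar ^ 2 / 8 *
      ((fun k => expec Ω (pd k T₀)) ⬝ᵥ M.mulVec (fun k => expec Ω (pd k T₀))) /
        cov Ω T₀ T₀ :=
  meanQ_ge_bound_general hbar Ω hΩc hΩnorm M hM T₀ hT₀ hT₀L2 hT₀L1 hdT₀L1 hcov hint1 hint2 hbd1 hbd2
    hbd3
end

section
/- Let Ω be a probability amplitude on ℝ (one degree of freedom, M = 1/m with m > 0) whose density Ω² has finite variance Δq² := ⟨q²⟩ − ⟨q⟩². Then the mean value of the quantum potential ⟨Q⟩ := −(ħ²/2m) ∫ Ω Ω'' dq satisfies ⟨Q⟩ · Δq² ≥ ħ²/(8m). -/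
/-!
Integrating by parts, `⟨Q⟩ = (ħ²/2m) ∫ Ω'²` and `∫ (q - ⟨q⟩) Ω Ω' = -1/2`. Cauchy–Schwarz in `L²`
applied to `(q - ⟨q⟩) Ω` and `Ω'` then gives `1/4 ≤ Δq² ∫ Ω'²`.
-/

open MeasureTheory Filter

namespace MeasureTheory.MemLp

variable {α : Type*} [MeasurableSpace α] {μ : Measure α} {f g : α → ℝ}

theorem sq_integral_mul_le_integral_sq_mul_integral_sq (hf : MemLp f 2 μ) (hg : MemLp g 2 μ) :
    (∫ x, f x * g x ∂μ) ^ 2 ≤ (∫ x, f x ^ 2 ∂μ) * ∫ x, g x ^ 2 ∂μ := by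
  have hquad : ∀ t : ℝ, 0 ≤ (∫ x, f x ^ 2 ∂μ) * (t * t) + 2 * (∫ x, f x * g x ∂μ) * t +
      ∫ x, g x ^ 2 ∂μ := by
    intro t
    have hf2 := hf.integrable_sq.const_mul (t * t)
    have hfg : Integrable (fun x => (2 * t) * (f x * g x)) μ :=
      (hf.integrable_mul hg).const_mul _
    calc 0 ≤ ∫ x, (t * f x + g x) ^ 2 ∂μ := integral_nonneg fun _ => sq_nonneg _
      _ = ∫ x, (t * t) * f x ^ 2 + (2 * t) * (f x * g x) + g x ^ 2 ∂μ :=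
          integral_congr_ae <| ae_of_all _ fun x => by ring
      _ = _ := by
        rw [integral_add ?_ hg.integrable_sq, integral_add hf2 hfg, integral_const_mul,
          integral_const_mul]
        · ring
        · exact hf2.add hfg
  have := discrim_le_zero hquad
  rw [discrim] at this
  linarith

end MeasureTheory.MemLp

theorem integral_mul_sub_integral_mul_sq {ρ : ℝ → ℝ} (hρ : Integrable ρ)
    (hρ₁ : Integrable fun q => ρ q * q) (hρ₂ : Integrable fun q => ρ q * q ^ 2)
    (hnorm : ∫ q, ρ q = 1) :
    ∫ q, ρ q * (q - ∫ x, ρ x * x) ^ 2 = (∫ q, ρ q * q ^ 2) - (∫ q, ρ q * q) ^ 2 := by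
  calc ∫ q, ρ q * (q - ∫ x, ρ x * x) ^ 2
        = ∫ q, ρ q * q ^ 2 - (2 * ∫ x, ρ x * x) * (ρ q * q) + (∫ x, ρ x * x) ^ 2 * ρ q :=
        integral_congr_ae <| ae_of_all _ fun q => by ring
    _ = _ := by
      rw [integral_add ?_ (hρ.const_mul _), integral_sub hρ₂ (hρ₁.const_mul _),
        integral_const_mul, integral_const_mul, hnorm]
      · ring
      · exact hρ₂.sub (hρ₁.const_mul _)

section IntegrationByParts

variable {f : ℝ → ℝ}

theorem integral_deriv_sq_eq_neg_integral_mul_deriv_deriv (hf : Differentiable ℝ f)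
    (hf' : Differentiable ℝ (deriv f)) (hff'' : Integrable fun x => f x * deriv (deriv f) x)
    (hf'2 : Integrable fun x => deriv f x ^ 2)
    (hbd : ∫ x, deriv (fun y => f y * deriv f y) x = 0) :
    ∫ x, deriv f x ^ 2 = -∫ x, f x * deriv (deriv f) x := by
  have hderiv : deriv (fun y => f y * deriv f y) =
      fun x => deriv f x ^ 2 + f x * deriv (deriv f) x := by
    ext x
    rw [deriv_fun_mul (hf x) (hf' x)]
    ring
  rw [hderiv, integral_add hf'2 hff''] at hbd
  linarith

theorem integral_mul_deriv_eq_zero (hf : Differentiable ℝ f)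
    (hbd : ∫ x, deriv (fun y => f y ^ 2) x = 0) : ∫ x, f x * deriv f x = 0 := by
  have hderiv : deriv (fun y => f y ^ 2) = fun x => 2 * (f x * deriv f x) := by
    ext x
    rw [((hf x).hasDerivAt.fun_pow 2).deriv]
    push_cast
    ring
  rw [hderiv, integral_const_mul] at hbd
  linarith

theorem integral_mul_mul_deriv_eq (hf : Differentiable ℝ f) (hf2 : Integrable fun x => f x ^ 2)
    (hxff' : Integrable fun x => x * f x * deriv f x)
    (hbd : ∫ x, deriv (fun y => y * f y ^ 2) x = 0) :
    ∫ x, x * f x * deriv f x = -(∫ x, f x ^ 2) / 2 := by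
  have hderiv : deriv (fun y => y * f y ^ 2) = fun x => f x ^ 2 + 2 * (x * f x * deriv f x) := by
    ext x
    rw [((hasDerivAt_id' x).fun_mul ((hf x).hasDerivAt.fun_pow 2)).deriv]
    push_cast
    ring
  rw [hderiv, integral_add hf2 (hxff'.const_mul 2), integral_const_mul] at hbd
  linarith

theorem integral_sub_mul_mul_deriv_eq (hf : Differentiable ℝ f) (hf2 : MemLp f 2)
    (hxf : MemLp (fun x => x * f x) 2) (hf' : MemLp (deriv f) 2)
    (hbd₁ : ∫ x, deriv (fun y => f y ^ 2) x = 0) (hbd₂ : ∫ x, deriv (fun y => y * f y ^ 2) x = 0)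
    (a : ℝ) : ∫ x, (x - a) * f x * deriv f x = -(∫ x, f x ^ 2) / 2 := by
  have hxff' : Integrable fun x => x * f x * deriv f x := hxf.integrable_mul hf'
  have hff' : Integrable fun x => a * (f x * deriv f x) := (hf2.integrable_mul hf').const_mul a
  calc ∫ x, (x - a) * f x * deriv f x = ∫ x, x * f x * deriv f x - a * (f x * deriv f x) :=
        integral_congr_ae <| ae_of_all _ fun x => by ring
    _ = _ := by
      rw [integral_sub hxff' hff', integral_const_mul,
        integral_mul_mul_deriv_eq hf hf2.integrable_sq hxff' hbd₂,
        integral_mul_deriv_eq_zero hf hbd₁]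
      ring

end IntegrationByParts

theorem meanQ_mul_posVar_ge_general {hbar m : ℝ} (hm : 0 < m)
    (Ω : ℝ → ℝ) (hΩc : ContDiff ℝ 2 Ω)
    (hΩnorm : ∫ q, (Ω q) ^ 2 = 1)
    -- finite variance of the density Ω²
    (hq2 : Integrable (fun q => (Ω q) ^ 2 * q ^ 2))
    -- all integrals appearing converge absolutely
    (hint1 : Integrable (fun q => Ω q * deriv (deriv Ω) q))
    (hint2 : Integrable (fun q => (deriv Ω q) ^ 2))
    -- Ω and Ω' tend to 0 at infinity, fast enough that all boundary terms in
    -- integration by parts vanish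
    (hbd1 : ∫ q, deriv (fun x => Ω x * deriv Ω x) q = 0)
    (hbd2 : ∫ q, deriv (fun x => (Ω x) ^ 2) q = 0)
    (hbd3 : ∫ q, deriv (fun x => x * (Ω x) ^ 2) q = 0) :
    (-(hbar ^ 2 / (2 * m)) * ∫ q, Ω q * deriv (deriv Ω) q) *
        ((∫ q, (Ω q) ^ 2 * q ^ 2) - (∫ q, (Ω q) ^ 2 * q) ^ 2) ≥
      hbar ^ 2 / (8 * m) := by
  have hΩd : Differentiable ℝ Ω := hΩc.differentiable (by norm_num)
  have hΩ'd : Differentiable ℝ (deriv Ω) :=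
    ((contDiff_succ_iff_deriv (n := 1)).mp hΩc).2.2.differentiable (by norm_num)
  have hΩ : MemLp Ω 2 := (memLp_two_iff_integrable_sq hΩd.continuous.aestronglyMeasurable).2 <|
    .of_integral_ne_zero (by simp [hΩnorm])
  have hqΩ : MemLp (fun q => q * Ω q) 2 :=
    (memLp_two_iff_integrable_sq (continuous_id.mul hΩd.continuous).aestronglyMeasurable).2 <| by
      simpa [mul_pow, mul_comm] using hq2
  have hΩ' : MemLp (deriv Ω) 2 :=
    (memLp_two_iff_integrable_sq (hΩc.continuous_deriv (by norm_num)).aestronglyMeasurable).2 hint2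
  have hΩ2q : Integrable fun q => Ω q ^ 2 * q :=
    (hΩ.integrable_mul hqΩ).congr <| ae_of_all _ fun q => by simp only [Pi.mul_apply]; ring
  set a := ∫ q, Ω q ^ 2 * q
  have hcΩ : MemLp (fun q => (q - a) * Ω q) 2 := by
    convert hqΩ.sub (hΩ.const_mul a) using 1
    ext q
    simp [sub_mul]
  have hvar : ∫ q, ((q - a) * Ω q) ^ 2 = (∫ q, Ω q ^ 2 * q ^ 2) - a ^ 2 := by
    rw [← integral_mul_sub_integral_mul_sq hΩ.integrable_sq hΩ2q hq2 hΩnorm]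
    exact integral_congr_ae <| ae_of_all _ fun q => by ring
  have hCS := hcΩ.sq_integral_mul_le_integral_sq_mul_integral_sq hΩ'
  rw [integral_sub_mul_mul_deriv_eq hΩd hΩ hqΩ hΩ' hbd2 hbd3, hΩnorm, hvar] at hCS
  rw [ge_iff_le, ← neg_neg (∫ q, Ω q * deriv (deriv Ω) q),
    ← integral_deriv_sq_eq_neg_integral_mul_deriv_deriv hΩd hΩ'd hint1 hint2 hbd1]
  calc hbar ^ 2 / (8 * m) = hbar ^ 2 / (2 * m) * (1 / 4) := by field_simp; ring
    _ ≤ hbar ^ 2 / (2 * m) * (((∫ q, Ω q ^ 2 * q ^ 2) - a ^ 2) * ∫ q, deriv Ω q ^ 2) := by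
        gcongr
        linarith
    _ = _ := by ring

/-- for a one-degree-of-freedom system with mass `m`, the mean value of
the quantum potential `⟨Q⟩ = -(ħ²/2m) ∫ Ω Ω''` satisfies `⟨Q⟩ ⋅ Δq² ≥ ħ²/(8m)`. -/
theorem meanQ_mul_posVar_ge {hbar m : ℝ} (hhbar : 0 < hbar) (hm : 0 < m)
    (Ω : ℝ → ℝ) (hΩc : ContDiff ℝ 2 Ω) (hΩpos : ∀ q, 0 < Ω q)
    (hΩnorm : ∫ q, (Ω q) ^ 2 = 1)
    -- finite variance of the density Ω²
    (hq1 : Integrable (fun q => (Ω q) ^ 2 * q))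
    (hq2 : Integrable (fun q => (Ω q) ^ 2 * q ^ 2))
    -- all integrals appearing converge absolutely
    (hint1 : Integrable (fun q => Ω q * deriv (deriv Ω) q))
    (hint2 : Integrable (fun q => (deriv Ω q) ^ 2))
    (hint3 : Integrable (fun q => q * Ω q * deriv Ω q))
    -- Ω and Ω' tend to 0 at infinity, fast enough that all boundary terms in
    -- integration by parts vanish
    (hdec : Tendsto Ω (cocompact ℝ) (nhds 0))
    (hdec' : Tendsto (deriv Ω) (cocompact ℝ) (nhds 0))
    (hbd1 : ∫ q, deriv (fun x => Ω x * deriv Ω x) q = 0)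
    (hbd2 : ∫ q, deriv (fun x => (Ω x) ^ 2) q = 0)
    (hbd3 : ∫ q, deriv (fun x => x * (Ω x) ^ 2) q = 0) :
    (-(hbar ^ 2 / (2 * m)) * ∫ q, Ω q * deriv (deriv Ω) q) *
        ((∫ q, (Ω q) ^ 2 * q ^ 2) - (∫ q, (Ω q) ^ 2 * q) ^ 2) ≥
      hbar ^ 2 / (8 * m) :=
  meanQ_mul_posVar_ge_general hm Ω hΩc hΩnorm hq2 hint1 hint2 hbd1 hbd2 hbd3
end
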